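/- arXiv:1510.08211 — 4 statements merged into one kernel-verified Lean document; each statement's English description precedes it below -/
import Mathlib

section
/- Let R be a finite (not necessarily unital, not necessarily commutative) ring and S a subring of R. Then Pr(S, R) = Pr(R) if and only if S + C_R(r) = R for all r ∈ R. -/
open scoped Pointwise

/-- The probability that a randomly chosen pair, one element from `S` and one from `T`,
commutes (multiplicatively). For a subring `S` of a finite ring `R` this gives
`Pr(S, R) = relCommProb R S Set.univ`, `Pr(R) = relCommProb R Set.univ Set.univ`, etc. -/
noncomputable def relCommProb (R : Type*) [NonUnitalRing R] (S T : Set R) : ℚ :=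
  (Nat.card {p : S × T // (p.1 : R) * (p.2 : R) = (p.2 : R) * (p.1 : R)} : ℚ) /
    ((Nat.card S : ℚ) * (Nat.card T : ℚ))

/-- `C_S(r)`: the centralizer of `r` in the subring `S`, as an additive subgroup of `R`.
Taking `S = ⊤` gives `C_R(r)`. -/
def centIn {R : Type*} [NonUnitalRing R] (S : NonUnitalSubring R) (r : R) : AddSubgroup R where
  carrier := {x | x ∈ S ∧ x * r = r * x}
  zero_mem' := ⟨S.zero_mem, by rw [zero_mul, mul_zero]⟩
  add_mem' := by
    rintro a b ⟨ha, ha'⟩ ⟨hb, hb'⟩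
    exact ⟨S.add_mem ha hb, by rw [add_mul, mul_add, ha', hb']⟩
  neg_mem' := by
    rintro a ⟨ha, ha'⟩
    exact ⟨S.neg_mem ha, by rw [neg_mul, mul_neg, ha']⟩

/-- `Z(S, R)`: the elements of the subring `S` commuting with every element of `R`,
as an additive subgroup of `R`.  Taking `S = ⊤` gives the center `Z(R)`. -/
def zCenter {R : Type*} [NonUnitalRing R] (S : NonUnitalSubring R) : AddSubgroup R where
  carrier := {x | x ∈ S ∧ ∀ r : R, x * r = r * x}
  zero_mem' := ⟨S.zero_mem, fun r => by rw [zero_mul, mul_zero]⟩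
  add_mem' := by
    rintro a b ⟨ha, ha'⟩ ⟨hb, hb'⟩
    exact ⟨S.add_mem ha hb, fun r => by rw [add_mul, mul_add, ha' r, hb' r]⟩
  neg_mem' := by
    rintro a ⟨ha, ha'⟩
    exact ⟨S.neg_mem ha, fun r => by rw [neg_mul, mul_neg, ha' r]⟩

/-- `K(S, R)`: the set of additive commutators `s*r - r*s` with `s ∈ S`, `r ∈ R`. -/
def kSet {R : Type*} [NonUnitalRing R] (S : NonUnitalSubring R) : Set R :=
  {x | ∃ s ∈ S, ∃ r : R, x = s * r - r * s}

/-- `[S, R]`: the additive subgroup of `(R, +)` generated by `K(S, R)`. -/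
def commSub {R : Type*} [NonUnitalRing R] (S : NonUnitalSubring R) : AddSubgroup R :=
  AddSubgroup.closure (kSet S)

/-- `[x, R]`: the additive subgroup of all commutators `x*y - y*x`, `y ∈ R`. -/
def elemComm {R : Type*} [NonUnitalRing R] (x : R) : AddSubgroup R where
  carrier := {z | ∃ y : R, z = x * y - y * x}
  zero_mem' := ⟨0, by simp⟩
  add_mem' := by
    rintro a b ⟨y, rfl⟩ ⟨z, rfl⟩
    exact ⟨y + z, by rw [mul_add, add_mul]; abel⟩
  neg_mem' := by
    rintro a ⟨y, rfl⟩
    exact ⟨-y, by rw [mul_neg, neg_mul]; abel⟩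

/-! Counting commuting pairs by their second coordinate,
`Pr(S, R) = Σ_r |C_S(r)| / (|S| |R|)` and `Pr(R) = Σ_r |C_R(r)| / |R|²`.
Since `|S ∩ C_R(r)| · |S + C_R(r)| = |S| · |C_R(r)|`, each summand satisfies
`|C_R(r)| / |R| ≤ |C_S(r)| / |S|`, with equality exactly when `S + C_R(r) = R`; so
`Pr(R) ≤ Pr(S, R)`, with equality iff every summand is an equality. -/

namespace AddSubgroup

variable {G : Type*} [AddGroup G] (A C : AddSubgroup G) [A.Normal]

theorem card_inf_mul_card_sup :
    Nat.card (A ⊓ C : AddSubgroup G) * Nat.card (A ⊔ C : AddSubgroup G) =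
      Nat.card A * Nat.card C := by
  have hC : Nat.card (A ⊓ C : AddSubgroup G) * A.relIndex C = Nat.card C := by
    rw [← inf_relIndex_right, ← relIndex_bot_left, ← relIndex_bot_left,
      relIndex_mul_relIndex _ _ _ bot_le inf_le_right]
  have hAC : Nat.card A * A.relIndex C = Nat.card (A ⊔ C : AddSubgroup G) := by
    rw [← relIndex_sup_left, ← relIndex_bot_left, ← relIndex_bot_left,
      relIndex_mul_relIndex _ _ _ bot_le le_sup_left]
  rw [← hC, ← hAC]
  ring

variable [Finite G]

theorem card_mul_card_le_card_inf_mul_card :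
    Nat.card C * Nat.card A ≤ Nat.card (A ⊓ C : AddSubgroup G) * Nat.card G := by
  rw [mul_comm, ← A.card_inf_mul_card_sup C]
  exact Nat.mul_le_mul_left _ (Nat.card_le_card_of_injective _ Subtype.coe_injective)

theorem card_mul_card_eq_card_inf_mul_card_iff :
    Nat.card C * Nat.card A = Nat.card (A ⊓ C : AddSubgroup G) * Nat.card G ↔
      A ⊔ C = ⊤ := by
  rw [mul_comm, ← A.card_inf_mul_card_sup C, Nat.mul_right_inj Nat.card_pos.ne',
    card_eq_iff_eq_top]

end AddSubgroup

section Counting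

variable {R : Type*} [NonUnitalRing R]

theorem centIn_eq_toAddSubgroup_inf (S : NonUnitalSubring R) (r : R) :
    centIn S r = S.toAddSubgroup ⊓ centIn ⊤ r := by
  ext x
  exact ⟨fun ⟨hS, hc⟩ => ⟨hS, trivial, hc⟩, fun ⟨hS, _, hc⟩ => ⟨hS, hc⟩⟩

variable [Fintype R]

theorem card_commuting_pairs_eq_sum (S : Set R) :
    Nat.card {p : S × (Set.univ : Set R) // (p.1 : R) * (p.2 : R) = (p.2 : R) * (p.1 : R)} =
      ∑ r : R, Nat.card {s : S // (s : R) * r = r * (s : R)} := by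
  let e : {p : S × (Set.univ : Set R) // (p.1 : R) * (p.2 : R) = (p.2 : R) * (p.1 : R)} ≃
      (r : R) × {s : S // (s : R) * r = r * (s : R)} :=
    { toFun := fun p => ⟨p.1.2, p.1.1, p.2⟩
      invFun := fun x => ⟨(x.2.1, ⟨x.1, trivial⟩), x.2.2⟩
      left_inv := fun _ => rfl
      right_inv := fun _ => rfl }
  rw [Nat.card_congr e, Nat.card_sigma]

theorem relCommProb_eq_sum_card_centIn (S : NonUnitalSubring R) :
    relCommProb R S Set.univ =
      (∑ r : R, Nat.card (centIn S r) : ℚ) / (Nat.card S * Nat.card R) := by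
  rw [relCommProb, card_commuting_pairs_eq_sum, Nat.card_univ, Nat.cast_sum]
  congr 2 with r
  exact congrArg Nat.cast <| Nat.card_congr <|
    Equiv.subtypeSubtypeEquivSubtypeInter (· ∈ S) fun x => x * r = r * x

theorem relCommProb_univ_eq_sum_card_centIn :
    relCommProb R Set.univ Set.univ =
      (∑ r : R, Nat.card (centIn ⊤ r) : ℚ) / (Nat.card R * Nat.card R) := by
  simpa using relCommProb_eq_sum_card_centIn (⊤ : NonUnitalSubring R)

end Counting

/-- `Pr(S, R) = Pr(R)` iff `S + C_R(r) = R` for all `r ∈ R`. -/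
theorem relCommProb_eq_commProb_iff {R : Type*} [NonUnitalRing R] [Fintype R]
    (S : NonUnitalSubring R) :
    relCommProb R (S : Set R) Set.univ = relCommProb R Set.univ Set.univ ↔
      ∀ r : R, (S : Set R) + ((centIn ⊤ r : AddSubgroup R) : Set R) = Set.univ := by
  set A := S.toAddSubgroup
  have hS : (0 : ℚ) < Nat.card S := by exact_mod_cast Nat.card_pos
  have hR : (0 : ℚ) < Nat.card R := by exact_mod_cast Nat.card_pos
  have hsum : relCommProb R (S : Set R) Set.univ = relCommProb R Set.univ Set.univ ↔
      ∑ r : R, Nat.card (centIn ⊤ r) * Nat.card A =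
        ∑ r : R, Nat.card (A ⊓ centIn ⊤ r : AddSubgroup R) * Nat.card R := by
    rw [relCommProb_eq_sum_card_centIn, relCommProb_univ_eq_sum_card_centIn,
      div_eq_div_iff (by positivity) (by positivity), eq_comm, ← Finset.sum_mul,
      ← Finset.sum_mul]
    simp_rw [centIn_eq_toAddSubgroup_inf S]
    rw [← mul_assoc, ← mul_assoc, mul_left_inj' hR.ne']
    exact_mod_cast Iff.rfl
  rw [hsum, Finset.sum_eq_sum_iff_of_le fun r _ => A.card_mul_card_le_card_inf_mul_card _]
  simp only [Finset.mem_univ, true_imp_iff, A.card_mul_card_eq_card_inf_mul_card_iff]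
  refine forall_congr' fun r => ?_
  rw [← AddSubgroup.coe_eq_univ, AddSubgroup.add_normal]
  rfl
end

section
/- Let R be a finite (not necessarily unital, not necessarily commutative) ring and let S₁ ⊆ S₂ be subrings of R. Then Pr(S₂, R) ≤ Pr(S₁, R) ≤ Pr(S₁, S₂). -/
open scoped Pointwise

/-! Counting commuting pairs fibrewise over the first factor, `Pr(S, T)` is the average over
`s ∈ S` of `|C_T(s)| / |T|`, where `C_T(s) = T ⊓ C(s)` is an additive subgroup. For additive
subgroups `T₁ ≤ T₂` the index of `T₁ ⊓ C(s)` in `T₁` is at most that of `T₂ ⊓ C(s)` in `T₂`, so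
`Pr(S, T)` is antitone in `T`. The second inequality is the case `S₂ ≤ R`; by the symmetry
`Pr(S, T) = Pr(T, S)` the first is the case `S₁ ≤ S₂` with `S = R`. -/

namespace Subgroup

variable {G : Type*} [Group G]

@[to_additive card_inf_mul_relIndex]
theorem card_inf_mul_relIndex (H K : Subgroup G) :
    Nat.card ↥(H ⊓ K) * H.relIndex K = Nat.card K := by
  rw [← inf_relIndex_right, relIndex, ← Nat.card_congr (subgroupOfEquivOfLe inf_le_right).toEquiv,
    card_mul_index]

@[to_additive card_inf_mul_card_le]
theorem card_inf_mul_card_le [Finite G] (H : Subgroup G) {K L : Subgroup G} (hKL : K ≤ L) :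
    Nat.card ↥(H ⊓ L) * Nat.card K ≤ Nat.card ↥(H ⊓ K) * Nat.card L :=
  calc Nat.card ↥(H ⊓ L) * Nat.card K
      = Nat.card ↥(H ⊓ L) * Nat.card ↥(H ⊓ K) * H.relIndex K := by
        rw [mul_assoc, card_inf_mul_relIndex]
    _ ≤ Nat.card ↥(H ⊓ L) * Nat.card ↥(H ⊓ K) * H.relIndex L := by
        gcongr
        exact relIndex_le_of_le_right hKL (H.subgroupOf L).index_ne_zero_of_finite
    _ = Nat.card ↥(H ⊓ K) * Nat.card L := by
        rw [← card_inf_mul_relIndex H L]; ring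

end Subgroup

section CommutingPairs

variable {R : Type*} [NonUnitalRing R]

theorem relCommProb_comm (S T : Set R) : relCommProb R S T = relCommProb R T S := by
  rw [relCommProb, relCommProb, mul_comm (Nat.card S : ℚ)]
  congr 2
  exact Nat.card_congr ((Equiv.prodComm S T).subtypeEquiv fun _ => eq_comm)

theorem relCommProb_eq_sum [Finite R] (S T : Set R) [Fintype S] :
    relCommProb R S T =
      (∑ s : S, (Nat.card {t : T // (s : R) * t = t * s} : ℚ) / Nat.card T) / Nat.card S := by
  rw [relCommProb, ← Finset.sum_div, div_div, mul_comm (Nat.card T : ℚ), ← Nat.cast_sum,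
    ← Nat.card_sigma]
  congr 2
  exact Nat.card_congr
    (Equiv.subtypeProdEquivSigmaSubtype fun (s : S) (t : T) => (s : R) * t = t * s)

theorem card_commute_eq_card_centralizer_inf (T : AddSubgroup R) (s : R) :
    Nat.card {t : (T : Set R) // s * t = t * s} =
      Nat.card ↥((NonUnitalSubring.centralizer {s}).toAddSubgroup ⊓ T) :=
  Nat.card_congr ((Equiv.subtypeSubtypeEquivSubtypeInter (· ∈ T) (fun t => s * t = t * s)).trans
    (Equiv.subtypeEquivRight fun t => by simp [NonUnitalSubring.mem_centralizer_iff, and_comm]))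

theorem card_commute_div_card_antitone [Finite R] {T₁ T₂ : AddSubgroup R} (h : T₁ ≤ T₂) (s : R) :
    (Nat.card {t : (T₂ : Set R) // s * t = t * s} : ℚ) / Nat.card T₂ ≤
      (Nat.card {t : (T₁ : Set R) // s * t = t * s} : ℚ) / Nat.card T₁ := by
  rw [card_commute_eq_card_centralizer_inf, card_commute_eq_card_centralizer_inf,
    div_le_div_iff₀ (by exact_mod_cast Nat.card_pos) (by exact_mod_cast Nat.card_pos)]
  exact_mod_cast AddSubgroup.card_inf_mul_card_le _ h

theorem relCommProb_antitone_right [Finite R] (S : Set R) {T₁ T₂ : AddSubgroup R} (h : T₁ ≤ T₂) :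
    relCommProb R S T₂ ≤ relCommProb R S T₁ := by
  have := Fintype.ofFinite S
  rw [relCommProb_eq_sum, relCommProb_eq_sum]
  exact div_le_div_of_nonneg_right (Finset.sum_le_sum fun s _ => card_commute_div_card_antitone h s)
    (Nat.cast_nonneg _)

end CommutingPairs

/-- For subrings `S₁ ⊆ S₂` of a finite ring `R`:
`Pr(S₂, R) ≤ Pr(S₁, R) ≤ Pr(S₁, S₂)`. -/
theorem relCommProb_antitone_and_le {R : Type*} [NonUnitalRing R] [Fintype R]
    (S₁ S₂ : NonUnitalSubring R) (h : S₁ ≤ S₂) :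
    relCommProb R (S₂ : Set R) Set.univ ≤ relCommProb R (S₁ : Set R) Set.univ ∧
    relCommProb R (S₁ : Set R) Set.univ ≤ relCommProb R (S₁ : Set R) (S₂ : Set R) := by
  have h₁ := relCommProb_antitone_right ((⊤ : AddSubgroup R) : Set R)
    (NonUnitalSubring.toAddSubgroup_mono h)
  have h₂ := relCommProb_antitone_right (S₁ : Set R) (le_top : S₂.toAddSubgroup ≤ ⊤)
  simp only [NonUnitalSubring.coe_toAddSubgroup, AddSubgroup.coe_top] at h₁ h₂
  rw [relCommProb_comm _ (S₂ : Set R), relCommProb_comm _ (S₁ : Set R)] at h₁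
  exact ⟨h₁, h₂⟩
end

section
/- Let R be a finite (not necessarily unital, not necessarily commutative) ring with |R| > 1, let p be the smallest prime dividing |R|, and let S be a subring of R. If S is not contained in the center Z(R) and S is non-commutative, then Pr(S, R) ≤ (p² + p − 1)/p³. -/
open scoped Pointwise

/-- central elements of `S`, as an additive subgroup of the type `S`. -/
def zcAux {R : Type*} [NonUnitalRing R] (S : NonUnitalSubring R) : AddSubgroup S where
  carrier := {x | ∀ r : R, (x : R) * r = r * (x : R)}
  zero_mem' := fun r => by simp
  add_mem' := by
    intro a b ha hb r
    push_cast
    rw [add_mul, mul_add, ha r, hb r]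
  neg_mem' := by
    intro a ha r
    push_cast
    rw [neg_mul, mul_neg, ha r]

lemma mem_zcAux {R : Type*} [NonUnitalRing R] {S : NonUnitalSubring R} {x : S} :
    x ∈ zcAux S ↔ ∀ r : R, (x : R) * r = r * (x : R) := Iff.rfl

lemma comm_of_central {R : Type*} [NonUnitalRing R] (a z w : R) (n m : ℤ)
    (hz : ∀ r : R, z * r = r * z) (hw : ∀ r : R, w * r = r * w) :
    (n • a + z) * (m • a + w) = (m • a + w) * (n • a + z) := by
  have key : ((n : ℤ) • a) * (m • a) = (m • a) * (n • a) := by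
    rw [smul_mul_assoc, smul_mul_assoc, mul_smul_comm, mul_smul_comm, smul_smul, smul_smul,
      mul_comm]
  simp only [add_mul, mul_add]
  rw [key, hz (m • a), hz w, hw (n • a)]
  abel

lemma mul_p_le {n a p : ℕ} (hn : 0 < n) (ha : a ∣ n) (hlt : a < n)
    (hmin : ∀ q : ℕ, q.Prime → q ∣ n → p ≤ q) : a * p ≤ n := by
  obtain ⟨b, rfl⟩ := ha
  have hb : 1 < b := by
    have hb0 : b ≠ 0 := by rintro rfl; simp at hn
    have hb1 : b ≠ 1 := by rintro rfl; simp at hlt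
    omega
  have hq := hmin b.minFac (Nat.minFac_prime (by omega)) (dvd_mul_of_dvd_right b.minFac_dvd a)
  have : p ≤ b := hq.trans (Nat.minFac_le (by omega))
  exact Nat.mul_le_mul_left a this

lemma mem_centIn' {R : Type*} [NonUnitalRing R] {S : NonUnitalSubring R} {r x : R} :
    x ∈ centIn S r ↔ x ∈ S ∧ x * r = r * x := Iff.rfl

/-- If `p` is the smallest prime dividing `|R|`, `S` is a non-commutative subring of `R`
not contained in the center `Z(R)`, then `Pr(S, R) ≤ (p² + p − 1)/p³`. -/
theorem relCommProb_le_of_noncommutative {R : Type*} [NonUnitalRing R] [Fintype R]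
    (hR : 1 < Nat.card R) (p : ℕ) (hp : p.Prime) (hdvd : p ∣ Nat.card R)
    (hmin : ∀ q : ℕ, q.Prime → q ∣ Nat.card R → p ≤ q) (S : NonUnitalSubring R)
    (hnc : ¬ (S : Set R) ⊆ ((zCenter (⊤ : NonUnitalSubring R) : AddSubgroup R) : Set R))
    (hncomm : ∃ s ∈ S, ∃ t ∈ S, s * t ≠ t * s) :
    relCommProb R (S : Set R) Set.univ ≤ ((p : ℚ) ^ 2 + (p : ℚ) - 1) / (p : ℚ) ^ 3 := by
  classical
  set n := Nat.card R with hn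
  have hn0 : 0 < n := by omega
  set c : ↥(S : Set R) → ℕ := fun s => Nat.card {r : R // (s : R) * r = r * (s : R)} with hc
  set P : ↥(S : Set R) → Prop := fun s => ∀ r : R, (s : R) * r = r * (s : R) with hP
  -- counting the commuting pairs fiberwise
  have e : {q : (↥(S : Set R)) × (↥(Set.univ : Set R)) //
      (q.1 : R) * (q.2 : R) = (q.2 : R) * (q.1 : R)}
      ≃ Σ s : ↥(S : Set R), {r : R // (s : R) * r = r * (s : R)} :=
    { toFun := fun x => ⟨x.1.1, ⟨x.1.2, x.2⟩⟩
      invFun := fun x => ⟨(x.1, ⟨x.2.1, trivial⟩), x.2.2⟩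
      left_inv := fun x => rfl
      right_inv := fun x => rfl }
  have hcount : Nat.card {q : (↥(S : Set R)) × (↥(Set.univ : Set R)) //
      (q.1 : R) * (q.2 : R) = (q.2 : R) * (q.1 : R)} = ∑ s : ↥(S : Set R), c s := by
    rw [Nat.card_congr e, Nat.card_eq_fintype_card, Fintype.card_sigma]
    simp [hc, Nat.card_eq_fintype_card]
  -- centralizer cardinalities
  have hcent : ∀ s : ↥(S : Set R), P s → c s = n := fun s hs =>
    Nat.card_congr (Equiv.subtypeUnivEquiv hs)
  have hnoncent : ∀ s : ↥(S : Set R), ¬ P s → c s * p ≤ n := by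
    intro s hs
    have he : c s = Nat.card (centIn (⊤ : NonUnitalSubring R) (s : R)) :=
      Nat.card_congr (Equiv.subtypeEquivRight fun x => by
        rw [mem_centIn']
        exact ⟨fun h => ⟨by simp, h.symm⟩, fun h => h.2.symm⟩)
    have hdvd' : Nat.card (centIn (⊤ : NonUnitalSubring R) (s : R)) ∣ n :=
      AddSubgroup.card_addSubgroup_dvd_card _
    have hne : Nat.card (centIn (⊤ : NonUnitalSubring R) (s : R)) ≠ n := by
      intro h
      apply hs
      intro r
      have htop := AddSubgroup.eq_top_of_card_eq (centIn (⊤ : NonUnitalSubring R) (s : R)) h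
      have hr : r ∈ centIn (⊤ : NonUnitalSubring R) (s : R) := htop ▸ AddSubgroup.mem_top r
      exact hr.2.symm
    rw [he]
    exact mul_p_le hn0 hdvd' (lt_of_le_of_ne (Nat.le_of_dvd hn0 hdvd') hne) hmin
  -- center data
  set cS := Nat.card S with hcS
  set cZ := Nat.card (zcAux S) with hcZ
  set k := Nat.card (↥S ⧸ zcAux S) with hk
  have hqc : cS = k * cZ := AddSubgroup.card_eq_card_quotient_mul_card_addSubgroup (zcAux S)
  haveI : Nonempty (↥S) := ⟨0⟩
  have hcSpos : 0 < cS := Nat.card_pos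
  have hSd : cS ∣ n := by
    have h1 := AddSubgroup.card_addSubgroup_dvd_card (S.toAddSubgroup)
    have h2 : Nat.card S.toAddSubgroup = cS :=
      Nat.card_congr (Equiv.subtypeEquivRight fun x => Iff.rfl)
    rwa [h2] at h1
  -- the index k is neither 1 nor prime
  have hk1 : k ≠ 1 := by
    intro h1
    obtain ⟨x, hxS, hxnc⟩ : ∃ x ∈ S, ¬ ∀ r : R, x * r = r * x := by
      by_contra h
      push_neg at h
      exact hnc fun x hxS => ⟨by simp, h x hxS⟩
    have hsub : Subsingleton (↥S ⧸ zcAux S) := (Nat.card_eq_one_iff_unique.mp (hk.symm.trans h1)).1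
    have heq : ((⟨x, hxS⟩ : S) : ↥S ⧸ zcAux S) = ((0 : S) : ↥S ⧸ zcAux S) :=
      Subsingleton.elim _ _
    rw [QuotientAddGroup.eq_iff_sub_mem, sub_zero] at heq
    exact hxnc fun r => heq r
  have hknp : ¬ k.Prime := by
    intro hkp
    haveI : Fact k.Prime := ⟨hkp⟩
    haveI : IsAddCyclic (↥S ⧸ zcAux S) := isAddCyclic_of_prime_card hk.symm
    obtain ⟨g, hg⟩ := IsAddCyclic.exists_generator (α := ↥S ⧸ zcAux S)
    obtain ⟨a, rfl⟩ := QuotientAddGroup.mk'_surjective (zcAux S) g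
    have decomp : ∀ s : S, ∃ (m : ℤ) (z : R), (∀ r : R, z * r = r * z) ∧
        (s : R) = m • (a : R) + z := by
      intro s
      obtain ⟨m, hm⟩ := AddSubgroup.mem_zmultiples_iff.mp (hg s)
      have hm' : ((m • a : S) : ↥S ⧸ zcAux S) = (s : ↥S ⧸ zcAux S) := by
        rw [← hm]
        rfl
      rw [QuotientAddGroup.eq_iff_sub_mem] at hm'
      have hz : (s - m • a) ∈ zcAux S := by
        have := (zcAux S).neg_mem hm'
        rwa [neg_sub] at this
      refine ⟨m, ((s - m • a : S) : R), fun r => hz r, ?_⟩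
      push_cast
      abel
    obtain ⟨s, hsS, t, htS, hst⟩ := hncomm
    obtain ⟨ms, zs, hzs, hs'⟩ := decomp ⟨s, hsS⟩
    obtain ⟨mt, zt, hzt, ht'⟩ := decomp ⟨t, htS⟩
    apply hst
    calc s * t = (ms • (a : R) + zs) * (mt • (a : R) + zt) := by rw [← hs', ← ht']
      _ = (mt • (a : R) + zt) * (ms • (a : R) + zs) := comm_of_central _ _ _ _ _ hzs hzt
      _ = t * s := by rw [← hs', ← ht']
  -- hence k ≥ p²
  have hkd : k ∣ n := dvd_trans ⟨cZ, hqc⟩ hSd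
  have hk0 : k ≠ 0 := by
    intro h0
    rw [h0, zero_mul] at hqc
    omega
  have hpk : p * p ≤ k := by
    have hq : k.minFac.Prime := Nat.minFac_prime hk1
    obtain ⟨m, hm⟩ := k.minFac_dvd
    have hm1 : m ≠ 1 := by
      rintro rfl
      rw [mul_one] at hm
      exact hknp (hm ▸ hq)
    have hm0 : m ≠ 0 := by
      rintro rfl
      rw [mul_zero] at hm
      exact hk0 hm
    have hpq : p ≤ k.minFac := hmin _ hq (k.minFac_dvd.trans hkd)
    have hpm : p ≤ m := by
      have hmd : m ∣ n := (Dvd.intro_left k.minFac hm.symm).trans hkd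
      have h3 := hmin m.minFac (Nat.minFac_prime hm1) (m.minFac_dvd.trans hmd)
      exact h3.trans (Nat.minFac_le (by omega))
    calc p * p ≤ k.minFac * m := Nat.mul_le_mul hpq hpm
      _ = k := hm.symm
  have hZS : cZ * (p * p) ≤ cS := by
    rw [hqc, mul_comm k cZ]
    exact Nat.mul_le_mul_left _ hpk
  -- counting the central elements of S
  have eZ : {s : ↥(S : Set R) // P s} ≃ ↥(zcAux S) :=
    { toFun := fun x => ⟨⟨x.1.1, x.1.2⟩, x.2⟩
      invFun := fun x => ⟨⟨x.1.1, x.1.2⟩, x.2⟩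
      left_inv := fun x => rfl
      right_inv := fun x => rfl }
  have hfilter : (Finset.univ.filter P).card = cZ := by
    rw [← Fintype.card_subtype, ← Nat.card_eq_fintype_card, Nat.card_congr eZ]
  have hcoe : Nat.card (↥(S : Set R)) = cS :=
    Nat.card_congr (Equiv.subtypeEquivRight fun x => Iff.rfl)
  -- the key sum bound
  have hmain : (∑ s : ↥(S : Set R), c s) * p ≤ cZ * (n * (p - 1)) + cS * n := by
    rw [Finset.sum_mul]
    calc ∑ s : ↥(S : Set R), c s * p
        ≤ ∑ s : ↥(S : Set R), ((if P s then n * (p - 1) else 0) + n) := by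
          apply Finset.sum_le_sum
          intro s _
          by_cases hPs : P s
          · rw [if_pos hPs, hcent s hPs]
            obtain ⟨p', rfl⟩ : ∃ p', p = p' + 1 := ⟨p - 1, by have := hp.two_le; omega⟩
            simp [Nat.mul_succ]
          · rw [if_neg hPs, zero_add]
            exact hnoncent s hPs
      _ = (Finset.univ.filter P).card * (n * (p - 1)) + Nat.card (↥(S : Set R)) * n := by
          rw [Finset.sum_add_distrib, Finset.sum_ite, Finset.sum_const, Finset.sum_const_zero,
            add_zero, Finset.sum_const, smul_eq_mul, smul_eq_mul, Finset.card_univ,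
            Nat.card_eq_fintype_card]
      _ = cZ * (n * (p - 1)) + cS * n := by rw [hfilter, hcoe]
  -- total nat inequality
  have hNat : (∑ s : ↥(S : Set R), c s) * p ^ 3 ≤ cS * n * (p * p + p - 1) := by
    have hstep : (∑ s : ↥(S : Set R), c s) * p ^ 3
        = ((∑ s : ↥(S : Set R), c s) * p) * (p * p) := by ring
    calc (∑ s : ↥(S : Set R), c s) * p ^ 3
        = ((∑ s : ↥(S : Set R), c s) * p) * (p * p) := hstep
      _ ≤ (cZ * (n * (p - 1)) + cS * n) * (p * p) := Nat.mul_le_mul_right _ hmain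
      _ = (cZ * (p * p)) * (n * (p - 1)) + cS * n * (p * p) := by ring
      _ ≤ cS * (n * (p - 1)) + cS * n * (p * p) :=
          Nat.add_le_add_right (Nat.mul_le_mul_right _ hZS) _
      _ = cS * n * ((p - 1) + p * p) := by ring
      _ = cS * n * (p * p + p - 1) := by
          congr 1
          have := hp.two_le
          omega
  -- pass to rationals
  unfold relCommProb
  rw [hcount, hcoe, Nat.card_congr (Equiv.Set.univ R)]
  have hnum : (0 : ℚ) < (cS : ℚ) * (n : ℚ) := by
    have h1 : (0 : ℚ) < (cS : ℚ) := by exact_mod_cast hcSpos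
    have h2 : (0 : ℚ) < (n : ℚ) := by exact_mod_cast hn0
    exact mul_pos h1 h2
  have hppos : (0 : ℚ) < (p : ℚ) := by exact_mod_cast hp.pos
  rw [div_le_div_iff₀ hnum (by positivity)]
  have hcast := (Nat.cast_le (α := ℚ)).mpr hNat
  have hple : 1 ≤ p * p + p := le_trans hp.one_le (Nat.le_add_left p (p * p))
  have hp1 : 1 ≤ p := hp.one_le
  push_cast [Nat.cast_sub hple, Nat.cast_sub hp1] at hcast
  push_cast
  nlinarith [hcast]
end

section
/- Let R be a finite (not necessarily unital, not necessarily commutative) ring and S a subring of R. Then Pr(S, R) ≥ (1/|K(S, R)|) · (1 + (|K(S, R)| − 1)/|S : Z(S, R)|). In particular, if Z(S, R) ≠ S then Pr(S, R) > 1/|K(S, R)|. -/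
open scoped Pointwise

/-!
Counting commuting pairs by their first coordinate gives `Pr(S, R) |S| |R| = ∑_{s ∈ S} |C_R(s)|`.
The map `r ↦ s r - r s` is additive with kernel `C_R(s)` and image `[s, R] ⊆ K(S, R)`, so
`|C_R(s)| = |R| / |[s, R]| ≥ |R| / |K(S, R)|`, while `|C_R(s)| = |R|` for `s ∈ Z(S, R)`. Summing
and using `|S| = |S : Z(S, R)| |Z(S, R)|` gives the bound. If `Z(S, R) ≠ S`, some commutator
`s r - r s` is nonzero, so `|K(S, R)| > 1` and the bound exceeds `1 / |K(S, R)|`.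
-/

open Finset

section CommutatorCount

variable {R : Type*} [NonUnitalRing R]

def commutatorHom (s : R) : R →+ R :=
  AddMonoidHom.mulLeft s - AddMonoidHom.mulRight s

theorem commutatorHom_apply (s r : R) : commutatorHom s r = s * r - r * s := rfl

theorem ker_commutatorHom (s : R) : (commutatorHom s).ker = centIn ⊤ s := by
  ext r
  rw [AddMonoidHom.mem_ker, commutatorHom_apply, sub_eq_zero, eq_comm]
  exact ⟨fun h => ⟨trivial, h⟩, And.right⟩

theorem range_commutatorHom (s : R) : (commutatorHom s).range = elemComm s := by
  ext z
  exact ⟨fun ⟨r, hr⟩ => ⟨r, hr.symm⟩, fun ⟨r, hr⟩ => ⟨r, hr.symm⟩⟩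

theorem card_centIn_top_mul_card_elemComm (s : R) :
    Nat.card (centIn ⊤ s) * Nat.card (elemComm s) = Nat.card R := by
  rw [← ker_commutatorHom, ← range_commutatorHom, ← AddSubgroup.index_ker]
  exact AddSubgroup.card_mul_index _

theorem zero_mem_kSet (S : NonUnitalSubring R) : (0 : R) ∈ kSet S :=
  ⟨0, S.zero_mem, 0, by simp⟩

theorem card_kSet_pos [Finite R] (S : NonUnitalSubring R) : 0 < Nat.card (kSet S) :=
  have : Nonempty (kSet S) := ⟨⟨0, zero_mem_kSet S⟩⟩
  Nat.card_pos

theorem elemComm_subset_kSet {S : NonUnitalSubring R} {s : R} (hs : s ∈ S) :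
    (elemComm s : Set R) ⊆ kSet S := by
  rintro _ ⟨r, rfl⟩
  exact ⟨s, hs, r, rfl⟩

theorem centIn_top_eq_top {S : NonUnitalSubring R} {s : R} (hs : s ∈ zCenter S) :
    centIn ⊤ s = ⊤ :=
  eq_top_iff.mpr fun r _ => ⟨trivial, (hs.2 r).symm⟩

theorem one_lt_card_kSet [Finite R] {S : NonUnitalSubring R}
    (hS : ((zCenter S : AddSubgroup R) : Set R) ≠ (S : Set R)) : 1 < Nat.card (kSet S) := by
  obtain ⟨s, hsS, hsZ⟩ := Set.exists_of_ssubset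
    ((show ((zCenter S : AddSubgroup R) : Set R) ⊆ S from fun _ hx => hx.1).ssubset_of_ne hS)
  obtain ⟨r, hr⟩ : ∃ r, s * r ≠ r * s := by
    by_contra! h
    exact hsZ ⟨hsS, h⟩
  rw [Nat.card_coe_set_eq, Set.one_lt_ncard (Set.toFinite _)]
  exact ⟨_, ⟨s, hsS, r, rfl⟩, 0, zero_mem_kSet S, sub_ne_zero.mpr hr⟩

theorem card_le_card_centIn_top_mul_card_kSet [Finite R] {S : NonUnitalSubring R} {s : R}
    (hs : s ∈ S) : Nat.card R ≤ Nat.card (centIn ⊤ s) * Nat.card (kSet S) := by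
  rw [← card_centIn_top_mul_card_elemComm s]
  exact Nat.mul_le_mul_left _ (Nat.card_mono (Set.toFinite _) (elemComm_subset_kSet hs))

theorem card_commutingPairs (S : NonUnitalSubring R) [Fintype S] [Finite R] :
    Nat.card {p : ↥(S : Set R) × ↥(Set.univ : Set R) // (p.1 : R) * p.2 = p.2 * p.1} =
      ∑ s : S, Nat.card (centIn ⊤ (s : R)) := by
  rw [← Nat.card_sigma]
  exact Nat.card_congr
    { toFun := fun p => ⟨p.1.1, p.1.2, trivial, p.2.symm⟩
      invFun := fun q => ⟨(q.1, ⟨q.2, Set.mem_univ _⟩), q.2.2.2.symm⟩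
      left_inv := fun _ => rfl
      right_inv := fun _ => rfl }

theorem index_mul_card_filter_mem_zCenter (S : NonUnitalSubring R) [Fintype S]
    [DecidablePred (· ∈ zCenter S)] :
    ((zCenter S).addSubgroupOf S.toAddSubgroup).index * #{s : S | (s : R) ∈ zCenter S} =
      Nat.card S := by
  rw [← Fintype.card_subtype, ← Nat.card_eq_fintype_card]
  exact ((zCenter S).addSubgroupOf S.toAddSubgroup).index_mul_card

end CommutatorCount

theorem card_nsmul_add_card_filter_nsmul_le_sum {ι M : Type*} [Fintype ι] [AddCommGroup M]
    [PartialOrder M] [IsOrderedAddMonoid M] (f : ι → M) (p : ι → Prop) [DecidablePred p]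
    {b c : M} (hb : ∀ i, b ≤ f i) (hc : ∀ i, p i → c ≤ f i) :
    Fintype.card ι • b + #{i | p i} • (c - b) ≤ ∑ i, f i :=
  calc Fintype.card ι • b + #{i | p i} • (c - b)
      = ∑ i, (b + if p i then c - b else 0) := by
        rw [sum_add_distrib, sum_const, card_univ, sum_ite, sum_const_zero, add_zero, sum_const]
    _ ≤ ∑ i, f i := sum_le_sum fun i _ => by
        split_ifs with h
        · simpa using hc i h
        · simpa using hb i

section CommutingProbability

variable {R : Type*} [NonUnitalRing R] [Finite R] (S : NonUnitalSubring R) [Fintype S]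

theorem relCommProb_univ_eq_sum :
    relCommProb R S Set.univ =
      (∑ s : S, (Nat.card (centIn ⊤ (s : R)) : ℚ)) / (Nat.card S * Nat.card R) := by
  rw [relCommProb, card_commutingPairs, Nat.card_univ]
  push_cast
  rfl

theorem card_mul_add_card_filter_mul_le_sum_card_centIn [DecidablePred (· ∈ zCenter S)] :
    (Nat.card S : ℚ) * (Nat.card R / Nat.card (kSet S)) +
        #{s : S | (s : R) ∈ zCenter S} * (Nat.card R - Nat.card R / Nat.card (kSet S)) ≤
      ∑ s : S, (Nat.card (centIn ⊤ (s : R)) : ℚ) := by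
  have hk : (0 : ℚ) < Nat.card (kSet S) := by exact_mod_cast card_kSet_pos S
  simpa only [nsmul_eq_mul, Nat.card_eq_fintype_card] using
    card_nsmul_add_card_filter_nsmul_le_sum (fun s : S => (Nat.card (centIn ⊤ (s : R)) : ℚ))
      (fun s => (s : R) ∈ zCenter S)
      (fun s => (div_le_iff₀ hk).mpr (by exact_mod_cast card_le_card_centIn_top_mul_card_kSet s.2))
      (fun s hs => by rw [centIn_top_eq_top hs, AddSubgroup.card_top])

end CommutingProbability

/-- `Pr(S, R) ≥ (1/|K(S, R)|)(1 + (|K(S, R)| − 1)/|S : Z(S, R)|)`; in particular, if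
`Z(S, R) ≠ S` then `Pr(S, R) > 1/|K(S, R)|`. -/
theorem relCommProb_ge_kSet {R : Type*} [NonUnitalRing R] [Fintype R]
    (S : NonUnitalSubring R) :
    relCommProb R (S : Set R) Set.univ ≥
      (1 / (Nat.card (kSet S) : ℚ)) *
        (1 + ((Nat.card (kSet S) : ℚ) - 1) /
          (((zCenter S).addSubgroupOf S.toAddSubgroup).index : ℚ)) ∧
    (((zCenter S : AddSubgroup R) : Set R) ≠ (S : Set R) →
      relCommProb R (S : Set R) Set.univ > 1 / (Nat.card (kSet S) : ℚ)) := by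
  classical
  let _ : Fintype S := Fintype.ofFinite S
  have hbound := card_mul_add_card_filter_mul_le_sum_card_centIn S
  set k := Nat.card (kSet S)
  set n := ((zCenter S).addSubgroupOf S.toAddSubgroup).index
  have hk : 0 < k := card_kSet_pos S
  have hR : 0 < Nat.card R := Nat.card_pos
  have hS : 0 < Nat.card S := Nat.card_pos
  have hindex : n * #{s : S | (s : R) ∈ zCenter S} = Nat.card S :=
    index_mul_card_filter_mem_zCenter S
  have hn : 0 < n := Nat.pos_of_mul_pos_right (hindex ▸ hS)
  have hge : relCommProb R S Set.univ ≥ 1 / (k : ℚ) * (1 + (k - 1) / n) := by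
    rw [relCommProb_univ_eq_sum, ge_iff_le, le_div_iff₀ (by positivity)]
    refine Eq.trans_le ?_ hbound
    -- with `|S| = n |Z(S, R)|`, both sides equal `|Z(S, R)| |R| (n + k - 1) / k`
    rw [← hindex]
    push_cast
    field_simp
  refine ⟨hge, fun hZ => lt_of_lt_of_le ?_ hge⟩
  have hk1 : (1 : ℚ) < k := by exact_mod_cast one_lt_card_kSet hZ
  exact lt_mul_of_one_lt_right (by positivity) (lt_add_of_pos_right _ (by positivity))
end
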